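/- Let Δ₂ be the simplicial complex on vertices {w_{i,j} : 1 ≤ i ≤ m, 1 ≤ j ≤ n} whose faces are sets containing no pair w_{i,l}, w_{j,k} with i < j and k < l. Then the facets of Δ₂ are exactly the monotone lattice paths from (1,1) to (m,n), and Δ₂ is pure of dimension m+n-2. -/

import Mathlib

/-- A single step in a monotone lattice path: one unit down or one unit right. -/
def IsStep (p q : ℕ × ℕ) : Prop := q = (p.1 + 1, p.2) ∨ q = (p.1, p.2 + 1)

/-- `L` is a monotone lattice path from `(a,b)` to `(c,d)`. -/
def IsPath (a b c d : ℕ) (L : List (ℕ × ℕ)) : Prop :=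
  L ≠ [] ∧ L.head? = some (a, b) ∧ L.getLast? = some (c, d) ∧ L.Chain' IsStep

/-- A face of `Δ₂`: a set of grid positions with no strictly south-west pair. -/
def IsFace2 (m n : ℕ) (F : Finset (ℕ × ℕ)) : Prop :=
  (∀ v ∈ F, 1 ≤ v.1 ∧ v.1 ≤ m ∧ 1 ≤ v.2 ∧ v.2 ≤ n) ∧
  ∀ p ∈ F, ∀ q ∈ F, ¬(p.1 < q.1 ∧ q.2 < p.2)

def IsFacet2 (m n : ℕ) (F : Finset (ℕ × ℕ)) : Prop :=
  IsFace2 m n F ∧ ∀ G : Finset (ℕ × ℕ), IsFace2 m n G → F ⊆ G → F = G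

/-!
The faces of `Δ₂` are the chains of the grid `[1, m] × [1, n]` in the product order. A monotone
path is such a chain, and it meets every antidiagonal `i + j = s` (`2 ≤ s ≤ m + n`), while a chain
meets each antidiagonal at most once; hence paths are maximal faces, with `m + n - 1` elements.
Conversely every chain lies on a path: walk from `(1, 1)` to `(m, n)`, stepping right while a point
of the chain remains in the current row and down otherwise.
-/

theorem isFace2_iff_isChain {m n : ℕ} {F : Finset (ℕ × ℕ)} :
    IsFace2 m n F ↔
      (∀ v ∈ F, ((1, 1) : ℕ × ℕ) ≤ v ∧ v ≤ (m, n)) ∧ IsChain (· ≤ ·) (F : Set (ℕ × ℕ)) := by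
  simp only [IsFace2, IsChain, Set.Pairwise, Finset.mem_coe, Prod.le_def]
  constructor
  · rintro ⟨hbox, hsw⟩
    exact ⟨fun v hv => by have := hbox v hv; omega,
      fun p hp q hq _ => by have := hsw p hp q hq; have := hsw q hq p hp; omega⟩
  · rintro ⟨hbox, hchain⟩
    refine ⟨fun v hv => by have := hbox v hv; omega, fun p hp q hq => ?_⟩
    by_cases hpq : p = q
    · subst hpq; omega
    · have := hchain hp hq hpq; omega

theorem IsStep.lt {p q : ℕ × ℕ} (h : IsStep p q) : p < q := by
  rcases h with rfl | rfl <;> simp [Prod.lt_iff]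

theorem IsStep.sum_eq {p q : ℕ × ℕ} (h : IsStep p q) : q.1 + q.2 = p.1 + p.2 + 1 := by
  rcases h with rfl | rfl <;> simp only <;> omega

namespace IsPath

theorem singleton (c d : ℕ) : IsPath c d c d [(c, d)] :=
  ⟨List.cons_ne_nil _ _, rfl, rfl, List.isChain_singleton _⟩

theorem cons {a b c d : ℕ} {L : List (ℕ × ℕ)} (h : IsPath a b c d L) {p : ℕ × ℕ}
    (hp : IsStep p (a, b)) : IsPath p.1 p.2 c d (p :: L) := by
  obtain ⟨hne, hhead, hlast, hchain⟩ := h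
  obtain ⟨x, t, rfl⟩ := List.exists_cons_of_ne_nil hne
  obtain rfl : x = (a, b) := by simpa using hhead
  exact ⟨List.cons_ne_nil _ _, rfl, by rwa [List.getLast?_cons_cons],
    List.isChain_cons_cons.mpr ⟨hp, hchain⟩⟩

@[elab_as_elim]
theorem induction_on {c d : ℕ}
    {motive : ∀ a b L, IsPath a b c d L → Prop}
    (singleton : motive c d [(c, d)] (singleton c d))
    (cons : ∀ a b L (h : IsPath a b c d L) p (hp : IsStep p (a, b)), motive a b L h →
      motive p.1 p.2 (p :: L) (h.cons hp))
    {a b : ℕ} {L : List (ℕ × ℕ)} (h : IsPath a b c d L) : motive a b L h := by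
  induction L generalizing a b with
  | nil => exact absurd rfl h.1
  | cons x t ih =>
    obtain ⟨-, hhead, hlast, hchain⟩ := h
    obtain rfl : x = (a, b) := by simpa using hhead
    cases t with
    | nil =>
      obtain ⟨rfl, rfl⟩ : a = c ∧ b = d := by simpa using hlast
      exact singleton
    | cons y t =>
      obtain ⟨hstep, htail⟩ := List.isChain_cons_cons.mp hchain
      have hy : IsPath y.1 y.2 c d (y :: t) :=
        ⟨List.cons_ne_nil _ _, rfl, by rwa [List.getLast?_cons_cons] at hlast, htail⟩
      exact cons y.1 y.2 _ hy (a, b) hstep (ih hy)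

variable {a b c d : ℕ} {L : List (ℕ × ℕ)}

theorem length_add (h : IsPath a b c d L) : L.length + (a + b) = c + d + 1 := by
  induction h using IsPath.induction_on with
  | singleton => simp only [List.length_singleton]; omega
  | cons a b L _ p hp ih => have := hp.sum_eq; simp only [List.length_cons]; omega

theorem head_mem (h : IsPath a b c d L) : ((a, b) : ℕ × ℕ) ∈ L :=
  List.mem_of_mem_head? h.2.1

theorem mem_bounds (h : IsPath a b c d L) : ∀ v ∈ L, ((a, b) : ℕ × ℕ) ≤ v ∧ v ≤ (c, d) := by
  induction h using IsPath.induction_on with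
  | singleton => simp
  | cons a b L hL p hp ih =>
    intro v hv
    rcases List.mem_cons.mp hv with rfl | hv
    · exact ⟨le_rfl, hp.lt.le.trans (ih (a, b) hL.head_mem).2⟩
    · obtain ⟨hab, hcd⟩ := ih v hv
      exact ⟨hp.lt.le.trans hab, hcd⟩

theorem nodup (h : IsPath a b c d L) : L.Nodup := by
  induction h using IsPath.induction_on with
  | singleton => exact List.nodup_singleton _
  | cons a b L hL p hp ih =>
    refine List.nodup_cons.mpr ⟨fun hpL => ?_, ih⟩
    exact (hp.lt.trans_le ((hL.mem_bounds p hpL).1)).false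

theorem le_total_of_mem (h : IsPath a b c d L) : ∀ v ∈ L, ∀ w ∈ L, v ≤ w ∨ w ≤ v := by
  induction h using IsPath.induction_on with
  | singleton => simp
  | cons a b L hL p hp ih =>
    have hle : ∀ w ∈ L, p ≤ w := fun w hw => hp.lt.le.trans (hL.mem_bounds w hw).1
    simp only [List.mem_cons]
    rintro v (rfl | hv) w (rfl | hw)
    · exact Or.inl le_rfl
    · exact Or.inl (hle w hw)
    · exact Or.inr (hle v hv)
    · exact ih v hv w hw

theorem exists_mem_sum_eq (h : IsPath a b c d L) :
    ∀ s, a + b ≤ s → s ≤ c + d → ∃ v ∈ L, v.1 + v.2 = s := by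
  induction h using IsPath.induction_on with
  | singleton => intro s _ _; exact ⟨(c, d), List.mem_singleton_self _, by omega⟩
  | cons a b L hL p hp ih =>
    intro s hs hs'
    have := hp.sum_eq
    rcases Nat.lt_or_ge (p.1 + p.2) s with hlt | hle
    · obtain ⟨v, hv, rfl⟩ := ih s (by simp only at this ⊢; omega) hs'
      exact ⟨v, List.mem_cons_of_mem _ hv, rfl⟩
    · exact ⟨p, List.mem_cons_self, by omega⟩

end IsPath

section Construction

variable {S : Set (ℕ × ℕ)} {c d : ℕ}

theorem exists_isStep_toward_chain (hS : IsChain (· ≤ ·) S) (hSle : ∀ v ∈ S, v ≤ (c, d))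
    {a b : ℕ} (hab : ((a, b) : ℕ × ℕ) ≤ (c, d)) (hne : ((a, b) : ℕ × ℕ) ≠ (c, d)) :
    ∃ q, IsStep (a, b) q ∧ q ≤ (c, d) ∧ ∀ v ∈ S, ((a, b) : ℕ × ℕ) < v → q ≤ v := by
  simp only [Prod.le_def, Prod.lt_iff, ne_eq, Prod.ext_iff] at hSle hab hne ⊢
  -- Step right while a point of `S` remains in row `a`, and down otherwise.
  by_cases hright : ∃ v ∈ S, v.1 = a ∧ b < v.2
  · obtain ⟨v, hvS, hva, hvb⟩ := hright
    refine ⟨(a, b + 1), Or.inr rfl, by have := hSle v hvS; omega, fun w hwS hw => ?_⟩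
    have := hS.total hwS hvS
    simp only [Prod.le_def] at this
    omega
  · push Not at hright
    by_cases hac : a < c
    · refine ⟨(a + 1, b), Or.inl rfl, by omega, fun w hwS hw => ?_⟩
      have := hright w hwS
      omega
    · refine ⟨(a, b + 1), Or.inr rfl, by omega, fun w hwS hw => ?_⟩
      have := hright w hwS
      have := hSle w hwS
      omega

theorem exists_isPath_superset_of_isChain (hS : IsChain (· ≤ ·) S)
    (hSle : ∀ v ∈ S, v ≤ (c, d)) {a b : ℕ} (hab : ((a, b) : ℕ × ℕ) ≤ (c, d)) :
    ∃ L, IsPath a b c d L ∧ ∀ v ∈ S, ((a, b) : ℕ × ℕ) ≤ v → v ∈ L := by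
  by_cases hne : ((a, b) : ℕ × ℕ) = (c, d)
  · obtain ⟨rfl, rfl⟩ := Prod.ext_iff.mp hne
    refine ⟨[(a, b)], IsPath.singleton a b, fun v hvS hv => ?_⟩
    simp [le_antisymm (hSle v hvS) hv]
  obtain ⟨q, hstep, hq, hqS⟩ := exists_isStep_toward_chain hS hSle hab hne
  have := hstep.sum_eq
  have hdist : c + d - (q.1 + q.2) < c + d - (a + b) := by
    simp only [Prod.le_def] at hq; omega
  obtain ⟨L, hL, hLS⟩ := exists_isPath_superset_of_isChain hS hSle hq
  refine ⟨(a, b) :: L, hL.cons hstep, fun v hvS hv => ?_⟩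
  rcases hv.eq_or_lt with rfl | hlt
  · exact List.mem_cons_self
  · exact List.mem_cons_of_mem _ (hLS v hvS (hqS v hvS hlt))
termination_by c + d - (a + b)

end Construction

theorem IsPath.isFace2 {m n : ℕ} {L : List (ℕ × ℕ)} (h : IsPath 1 1 m n L) :
    IsFace2 m n L.toFinset := by
  refine isFace2_iff_isChain.mpr ⟨fun v hv => h.mem_bounds v (List.mem_toFinset.mp hv), ?_⟩
  intro v hv w hw _
  exact h.le_total_of_mem v (List.mem_toFinset.mp hv) w (List.mem_toFinset.mp hw)

/-- A face meets each antidiagonal `v.1 + v.2 = s` at most once, and a path meets each one. -/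
theorem IsPath.toFinset_eq_of_subset {m n : ℕ} {L : List (ℕ × ℕ)} (h : IsPath 1 1 m n L)
    {G : Finset (ℕ × ℕ)} (hG : IsFace2 m n G) (hLG : L.toFinset ⊆ G) : L.toFinset = G := by
  obtain ⟨hbox, hchain⟩ := isFace2_iff_isChain.mp hG
  refine hLG.antisymm fun v hv => ?_
  have hv1 := hbox v hv
  simp only [Prod.le_def] at hv1
  obtain ⟨p, hp, hps⟩ := h.exists_mem_sum_eq (v.1 + v.2) (by omega) (by omega)
  have hpv : p ≤ v ∨ v ≤ p := hchain.total (hLG (List.mem_toFinset.mpr hp)) hv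
  obtain rfl : p = v := by
    simp only [Prod.le_def] at hpv
    exact Prod.ext (by omega) (by omega)
  exact List.mem_toFinset.mpr hp

theorem isFacet2_iff_exists_isPath {m n : ℕ} (hm : 1 ≤ m) (hn : 1 ≤ n) {F : Finset (ℕ × ℕ)} :
    IsFacet2 m n F ↔ ∃ L, IsPath 1 1 m n L ∧ F = L.toFinset := by
  constructor
  · rintro ⟨hF, hmax⟩
    obtain ⟨hbox, hchain⟩ := isFace2_iff_isChain.mp hF
    obtain ⟨L, hL, hFL⟩ := exists_isPath_superset_of_isChain hchain
      (fun v hv => (hbox v hv).2) (a := 1) (b := 1) (Prod.mk_le_mk.mpr ⟨hm, hn⟩)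
    exact ⟨L, hL, hmax _ hL.isFace2 fun v hv => List.mem_toFinset.mpr (hFL v hv (hbox v hv).1)⟩
  · rintro ⟨L, hL, rfl⟩
    exact ⟨hL.isFace2, fun G hG hLG => hL.toFinset_eq_of_subset hG hLG⟩

theorem delta2_facets (m n : ℕ) (hm : 1 ≤ m) (hn : 1 ≤ n) :
    (∀ F : Finset (ℕ × ℕ),
        IsFacet2 m n F ↔ ∃ L : List (ℕ × ℕ), IsPath 1 1 m n L ∧ F = L.toFinset) ∧
    (∀ F : Finset (ℕ × ℕ), IsFacet2 m n F → F.card = m + n - 1) := by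
  refine ⟨fun F => isFacet2_iff_exists_isPath hm hn, fun F hF => ?_⟩
  obtain ⟨L, hL, rfl⟩ := (isFacet2_iff_exists_isPath hm hn).mp hF
  rw [List.toFinset_card_of_nodup hL.nodup]
  have := hL.length_add
  omega
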